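/- arXiv:1309.6259 — 3 statements merged into one kernel-verified Lean document; each statement's English description precedes it below -/
import Mathlib

section
/- Let R_1,...,R_m be nonzero real polynomials with pairwise distinct degrees, and let l_1,...,l_m be pairwise distinct real numbers. Then the polynomial x ↦ det(R_i(x - l_j))_{i,j=1}^m has degree exactly (Σ_{i=1}^m deg R_i) - binom(m,2). -/
/-!
Taylor expansion gives `R_i(x - l) = ∑_k (-l)^k (D^k R_i)(x)`, with `D^k` the Hasse derivatives,
so by multilinearity the determinant is `∑_r ∏_j (-l_j)^(r_j) det (D^(r_j) R_i)`. The term of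
`r` has degree at most `∑ deg R_i - ∑ r_j`, and it vanishes unless `r` is injective. An injective
`r` has `∑ r_j ≥ binom(m,2)`, with equality exactly when `r` is a permutation of `0, …, m-1`.
Hence the coefficient of `x^(∑ deg R_i - binom(m,2))` is
`det ((-l_j)^k) * det (binom(deg R_i, k) lc R_i)`: a Vandermonde determinant in the distinct
`l_j` times, up to factorials, a Vandermonde determinant in the distinct degrees.
-/

open Polynomial Finset Function Matrix Equiv

namespace Finset

theorem choose_two_card_lt_sum_id {s : Finset ℕ} (hs : s ≠ range #s) :
    (#s).choose 2 < ∑ x ∈ s, x := by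
  induction s using Finset.induction_on_max with
  | empty => exact absurd rfl hs
  | insert a t hlt ih =>
    have hat : a ∉ t := fun h => lt_irrefl a (hlt a h)
    have hcard : #t ≤ a := by simpa using card_le_card fun x hx => mem_range.2 (hlt x hx)
    have hchoose : (#t + 1).choose 2 = (#t).choose 1 + (#t).choose 2 :=
      Nat.choose_succ_succ' _ 1
    rw [card_insert_of_notMem hat, sum_insert hat, hchoose, Nat.choose_one_right]
    by_cases ht : t = range #t
    · have hne : a ≠ #t := by
        rintro rfl
        rw [card_insert_of_notMem hat, range_add_one, ← ht] at hs
        exact hs rfl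
      rw [ht, card_range, sum_range_id, ← Nat.choose_two_right]
      omega
    · have := ih ht
      omega

theorem choose_two_card_le_sum_id (s : Finset ℕ) : (#s).choose 2 ≤ ∑ x ∈ s, x := by
  by_cases hs : s = range #s
  · rw [hs, card_range, sum_range_id, Nat.choose_two_right]
  · exact (choose_two_card_lt_sum_id hs).le

end Finset

section InjectiveSum

variable {ι : Type*} [Fintype ι] {g : ι → ℕ}

theorem choose_two_card_le_sum_of_injective (hg : Injective g) :
    (Fintype.card ι).choose 2 ≤ ∑ j, g j := by
  classical
  simpa [card_image_of_injective _ hg, sum_image fun x _ y _ h => hg h] using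
    choose_two_card_le_sum_id (univ.image g)

theorem choose_two_card_lt_sum_of_injective (hg : Injective g)
    (h : ∃ j, Fintype.card ι ≤ g j) : (Fintype.card ι).choose 2 < ∑ j, g j := by
  classical
  obtain ⟨j, hj⟩ := h
  have hs : univ.image g ≠ range #(univ.image g) := by
    rw [card_image_of_injective _ hg, card_univ]
    intro hs
    have := hs ▸ mem_image_of_mem g (mem_univ j)
    simp only [mem_range] at this
    omega
  simpa [card_image_of_injective _ hg, sum_image fun x _ y _ h => hg h] using
    choose_two_card_lt_sum_id hs

end InjectiveSum

namespace Polynomial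

variable {R : Type*}

theorem comp_X_add_C_eq_sum_hasseDeriv [CommSemiring R] (p : R[X]) (a : R) {N : ℕ}
    (hN : p.natDegree < N) :
    p.comp (X + C a) = ∑ k ∈ range N, C (a ^ k) * hasseDeriv k p := by
  ext n
  rw [← taylor_apply, taylor_coeff, finsetSum_coeff,
    eval_eq_sum_range' ((natDegree_hasseDeriv_le p n).trans_lt (tsub_le_self.trans_lt hN))]
  refine sum_congr rfl fun k _ => ?_
  rw [coeff_C_mul, hasseDeriv_coeff, hasseDeriv_coeff, add_comm k n, Nat.choose_symm_add]
  ring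

theorem natDegree_hasseDeriv_add_le [Semiring R] {p : R[X]} {k : ℕ} (h : hasseDeriv k p ≠ 0) :
    (hasseDeriv k p).natDegree + k ≤ p.natDegree := by
  have hk : k ≤ p.natDegree := not_lt.1 fun hk => h (hasseDeriv_eq_zero_of_lt_natDegree p k hk)
  have := natDegree_hasseDeriv_le p k
  omega

theorem coeff_hasseDeriv_natDegree_sub [Semiring R] (p : R[X]) (k : ℕ) :
    (hasseDeriv k p).coeff (p.natDegree - k) = p.natDegree.choose k * p.leadingCoeff := by
  rw [hasseDeriv_coeff]
  rcases le_or_gt k p.natDegree with hk | hk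
  · rw [Nat.sub_add_cancel hk, leadingCoeff]
  · rw [Nat.choose_eq_zero_of_lt hk, coeff_eq_zero_of_natDegree_lt (by omega)]
    simp

theorem coeff_prod_sum_of_natDegree_le [CommSemiring R] {ι : Type*} (s : Finset ι)
    (f : ι → R[X]) (e : ι → ℕ) (h : ∀ i ∈ s, (f i).natDegree ≤ e i) :
    (∏ i ∈ s, f i).coeff (∑ i ∈ s, e i) = ∏ i ∈ s, (f i).coeff (e i) := by
  induction s using Finset.cons_induction with
  | empty => simp
  | cons a s ha ih =>
    have hs : ∀ i ∈ s, (f i).natDegree ≤ e i := fun i hi => h i (mem_cons_of_mem hi)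
    rw [prod_cons, sum_cons, prod_cons, ← ih hs, coeff_mul_add_eq_of_natDegree_le
      (h a (mem_cons_self a s)) ((natDegree_prod_le _ _).trans (sum_le_sum hs))]

end Polynomial

namespace Matrix

section WeightedDegree

variable {n R : Type*} [Fintype n] [CommRing R] {M : Matrix n n R[X]} {a b : n → ℕ}

/- The hypothesis `hM` below says that `M k i` has degree at most `a i - b k`, and is zero when
`a i < b k`; it is phrased without truncated subtraction. -/

theorem natDegree_prod_perm_add_le (hM : ∀ k i, M k i ≠ 0 → (M k i).natDegree + b k ≤ a i)
    (σ : Perm n) (h : ∏ i, M (σ i) i ≠ 0) :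
    (∏ i, M (σ i) i).natDegree + ∑ k, b k ≤ ∑ i, a i := by
  have hne : ∀ i, M (σ i) i ≠ 0 := fun i hi => h (prod_eq_zero (mem_univ i) hi)
  calc (∏ i, M (σ i) i).natDegree + ∑ k, b k
      ≤ ∑ i, (M (σ i) i).natDegree + ∑ i, b (σ i) := by
        rw [Equiv.sum_comp σ b]
        exact Nat.add_le_add_right (natDegree_prod_le _ _) _
    _ ≤ ∑ i, a i := by
        rw [← sum_add_distrib]
        exact sum_le_sum fun i _ => hM _ _ (hne i)

theorem coeff_det_eq_zero_of_lt [DecidableEq n]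
    (hM : ∀ k i, M k i ≠ 0 → (M k i).natDegree + b k ≤ a i)
    {e : ℕ} (he : ∑ i, a i < e + ∑ k, b k) : M.det.coeff e = 0 := by
  rw [det_apply, finsetSum_coeff]
  refine sum_eq_zero fun σ _ => ?_
  rw [coeff_smul]
  by_cases h : ∏ i, M (σ i) i = 0
  · rw [h, coeff_zero, smul_zero]
  · have := natDegree_prod_perm_add_le hM σ h
    rw [coeff_eq_zero_of_natDegree_lt (by omega), smul_zero]

theorem coeff_det_sum_sub_sum [DecidableEq n]
    (hM : ∀ k i, M k i ≠ 0 → (M k i).natDegree + b k ≤ a i) :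
    M.det.coeff (∑ i, a i - ∑ k, b k) = (of fun k i => (M k i).coeff (a i - b k)).det := by
  rw [det_apply, det_apply, finsetSum_coeff]
  refine sum_congr rfl fun σ _ => ?_
  rw [coeff_smul]
  congr 1
  by_cases hle : ∀ i, b (σ i) ≤ a i
  · have hsum : ∑ i, a i - ∑ k, b k = ∑ i, (a i - b (σ i)) := by
      rw [sum_tsub_distrib _ fun i _ => hle i, Equiv.sum_comp σ b]
    rw [hsum, coeff_prod_sum_of_natDegree_le]
    · rfl
    · intro i _
      by_cases hi : M (σ i) i = 0
      · simp [hi]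
      · have := hM _ _ hi
        omega
  · obtain ⟨i, hi⟩ := not_forall.1 hle
    rw [not_le] at hi
    have hz : M (σ i) i = 0 := by
      by_contra hne
      have := hM _ _ hne
      omega
    rw [prod_eq_zero (f := fun j => M (σ j) j) (mem_univ i) hz, coeff_zero,
      prod_eq_zero (mem_univ i) (by simp [hz])]

end WeightedDegree

theorem det_choose_ne_zero {m : ℕ} {d : Fin m → ℕ} (hd : Injective d) :
    (of fun i k : Fin m => ((d i).choose k : ℤ)).det ≠ 0 := by
  set A : Matrix (Fin m) (Fin m) ℤ := of fun i k => (d i).choose k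
  have hfact : (of fun i k : Fin m => (descPochhammer ℤ k).eval (d i : ℤ)) =
      of fun i (k : Fin m) => ((k : ℕ).factorial : ℤ) * A i k := by
    ext i k
    rw [of_apply, of_apply, descPochhammer_eval_eq_descFactorial,
      Nat.descFactorial_eq_factorial_mul_choose, Nat.cast_mul]
    rfl
  have hne : (vandermonde fun i => (d i : ℤ)).det ≠ 0 :=
    det_vandermonde_ne_zero_iff.2 (Nat.cast_injective.comp hd)
  rw [det_eval_matrixOfPolynomials_eq_det_vandermonde _ (fun k => descPochhammer ℤ k)
    (fun k => descPochhammer_natDegree ℤ k) (fun k => monic_descPochhammer ℤ k), hfact,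
    det_mul_row] at hne
  exact right_ne_zero_of_mul hne

theorem det_choose_mul_ne_zero {K : Type*} [CommRing K] [IsDomain K] [CharZero K] {m : ℕ}
    {d : Fin m → ℕ} (hd : Injective d) {c : Fin m → K} (hc : ∀ i, c i ≠ 0) :
    (of fun k i : Fin m => ((d i).choose k : K) * c i).det ≠ 0 := by
  have hmat : (of fun k i : Fin m => ((d i).choose k : K) * c i) =
      of fun k i => c i * ((of fun i k : Fin m => ((d i).choose k : ℤ)).map Int.cast)ᵀ k i := by
    ext k i
    simp [mul_comm]
  rw [hmat, det_mul_row, det_transpose, ← Int.cast_det]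
  exact mul_ne_zero (prod_ne_zero_iff.2 fun i _ => hc i)
    (Int.cast_ne_zero.2 (det_choose_ne_zero hd))

theorem sum_sign_mul_prod_pow_eq_det_vandermonde {R : Type*} [CommRing R] {m : ℕ}
    (v : Fin m → R) :
    ∑ σ : Perm (Fin m), Perm.sign σ * ∏ j, v j ^ (σ j : ℕ) = (vandermonde v).det := by
  rw [← det_transpose, det_apply']
  rfl

section HasseDerivMatrix

variable {n R : Type*}

noncomputable def hasseDerivMatrix [Semiring R] (p : n → R[X]) (r : n → ℕ) :
    Matrix n n R[X] :=
  of fun j i => hasseDeriv (r j) (p i)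

theorem natDegree_hasseDerivMatrix_add_le [Semiring R] (p : n → R[X]) (r : n → ℕ) (k i : n)
    (h : hasseDerivMatrix p r k i ≠ 0) :
    (hasseDerivMatrix p r k i).natDegree + r k ≤ (p i).natDegree :=
  natDegree_hasseDeriv_add_le h

variable [Fintype n] [DecidableEq n] [CommRing R]

theorem det_comp_X_sub_C_eq_sum (p : n → R[X]) (l : n → R) {N : ℕ}
    (hN : ∀ i, (p i).natDegree < N) :
    (of fun i j => (p i).comp (X - C (l j))).det =
      ∑ r ∈ Fintype.piFinset fun _ => range N,
        C (∏ j, (-l j) ^ r j) * (hasseDerivMatrix p r).det := by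
  have hrows : (of fun i j => (p i).comp (X - C (l j)))ᵀ =
      fun j => ∑ k ∈ range N, fun i => C ((-l j) ^ k) * hasseDeriv k (p i) := by
    funext j i
    rw [transpose_apply, of_apply, sub_eq_add_neg, ← C_neg,
      comp_X_add_C_eq_sum_hasseDeriv _ _ (hN i), Finset.sum_apply]
  rw [← det_transpose, hrows]
  refine (detRowAlternating.map_sum_finset _ _).trans (sum_congr rfl fun r _ => ?_)
  rw [map_prod, ← det_mul_column]
  rfl

theorem det_hasseDerivMatrix_eq_zero_of_not_injective (p : n → R[X]) {r : n → ℕ}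
    (hr : ¬ Injective r) : (hasseDerivMatrix p r).det = 0 := by
  obtain ⟨j, j', hjj', hne⟩ := not_injective_iff.1 hr
  exact det_zero_of_row_eq hne (by ext i; simp [hasseDerivMatrix, hjj'])

theorem coeff_det_hasseDerivMatrix_eq_zero (p : n → R[X]) (r : n → ℕ) {e : ℕ}
    (he : ∑ i, (p i).natDegree < e + ∑ j, r j) : (hasseDerivMatrix p r).det.coeff e = 0 :=
  coeff_det_eq_zero_of_lt (natDegree_hasseDerivMatrix_add_le p r) he

end HasseDerivMatrix

section FinIndexed

variable {R : Type*} [CommRing R] {m : ℕ}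

theorem coeff_det_hasseDerivMatrix_val (p : Fin m → R[X]) :
    (hasseDerivMatrix p fun k => k).det.coeff (∑ i, (p i).natDegree - m.choose 2) =
      (of fun k i : Fin m => ((p i).natDegree.choose k : R) * (p i).leadingCoeff).det := by
  have hval : ∑ k : Fin m, (k : ℕ) = m.choose 2 := by
    rw [Fin.sum_univ_eq_sum_range (fun k => k), sum_range_id, Nat.choose_two_right]
  rw [← hval, coeff_det_sum_sub_sum (natDegree_hasseDerivMatrix_add_le p _)]
  simp only [hasseDerivMatrix, of_apply, coeff_hasseDeriv_natDegree_sub]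

theorem degree_sum_C_mul_det_hasseDerivMatrix_le (p : Fin m → R[X]) (P : Finset (Fin m → ℕ))
    (c : (Fin m → ℕ) → R) :
    (∑ r ∈ P, C (c r) * (hasseDerivMatrix p r).det).degree ≤
      ↑(∑ i, (p i).natDegree - m.choose 2) := by
  refine (degree_le_iff_coeff_zero _ _).2 fun e he => ?_
  rw [Nat.cast_lt] at he
  rw [finsetSum_coeff]
  refine sum_eq_zero fun r _ => ?_
  by_cases hr : Injective r
  · have hsum := choose_two_card_le_sum_of_injective hr
    rw [Fintype.card_fin] at hsum
    rw [coeff_C_mul, coeff_det_hasseDerivMatrix_eq_zero p r (by omega), mul_zero]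
  · rw [det_hasseDerivMatrix_eq_zero_of_not_injective p hr, mul_zero, coeff_zero]

theorem coeff_sum_C_mul_det_hasseDerivMatrix (p : Fin m → R[X]) {P : Finset (Fin m → ℕ)}
    (c : (Fin m → ℕ) → R) (hP : ∀ σ : Perm (Fin m), (fun j => (σ j : ℕ)) ∈ P) :
    (∑ r ∈ P, C (c r) * (hasseDerivMatrix p r).det).coeff
        (∑ i, (p i).natDegree - m.choose 2) =
      (∑ σ : Perm (Fin m), Perm.sign σ * c fun j => σ j) *
        (of fun k i : Fin m => ((p i).natDegree.choose k : R) * (p i).leadingCoeff).det := by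
  classical
  have hvanish : ∀ r ∈ P, r ∉ univ.image (fun (σ : Perm (Fin m)) j => (σ j : ℕ)) →
      (C (c r) * (hasseDerivMatrix p r).det).coeff (∑ i, (p i).natDegree - m.choose 2) = 0 := by
    intro r _ hr
    by_cases hinj : Injective r
    · have hlarge : ∃ j, Fintype.card (Fin m) ≤ r j := by
        by_contra! hsmall
        refine hr (mem_image.2 ⟨Equiv.ofBijective (fun j => ⟨r j, by simpa using hsmall j⟩)
          (Finite.injective_iff_bijective.1 fun a b h => hinj (congrArg Fin.val h)),
          mem_univ _, rfl⟩)
      have hsum := choose_two_card_lt_sum_of_injective hinj hlarge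
      rw [Fintype.card_fin] at hsum
      rw [coeff_C_mul, coeff_det_hasseDerivMatrix_eq_zero p r (by omega), mul_zero]
    · rw [det_hasseDerivMatrix_eq_zero_of_not_injective p hinj, mul_zero, coeff_zero]
  rw [finsetSum_coeff, ← sum_subset (image_subset_iff.2 fun σ _ => hP σ) hvanish,
    sum_image fun σ _ τ _ h => Equiv.ext fun j => Fin.ext (congrFun h j), sum_mul]
  refine sum_congr rfl fun σ _ => ?_
  rw [coeff_C_mul, show hasseDerivMatrix p (fun j => (σ j : ℕ)) =
      (hasseDerivMatrix p fun k => k).submatrix σ id from rfl, det_permute, coeff_intCast_mul,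
    coeff_det_hasseDerivMatrix_val]
  ring

end FinIndexed

end Matrix

/-- If R_1,...,R_m are nonzero real polynomials with pairwise distinct degrees and
l_1,...,l_m are pairwise distinct reals, then the polynomial
x => det(R_i(x - l_j)) has degree exactly (sum of the degrees) - binom(m,2). -/
theorem casorati_det_degree (m : ℕ) (R : Fin m → Polynomial ℝ)
    (hR0 : ∀ i, R i ≠ 0)
    (hdeg : ∀ i j, i ≠ j → (R i).natDegree ≠ (R j).natDegree)
    (l : Fin m → ℝ) (hl : Function.Injective l) :
    (Matrix.det (Matrix.of fun i j : Fin m =>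
        (R i).comp (Polynomial.X - Polynomial.C (l j)))).degree
      = (((∑ i, (R i).natDegree) - m.choose 2 : ℕ) : WithBot ℕ) := by
  classical
  set S := ∑ i, (R i).natDegree
  have hd : Injective fun i => (R i).natDegree := fun i j h =>
    of_not_not fun hij => hdeg i j hij h
  have hN : ∀ i, (R i).natDegree < m + S + 1 := fun i => by
    have := single_le_sum (fun i _ => Nat.zero_le ((R i).natDegree)) (mem_univ i)
    omega
  have hP : ∀ σ : Perm (Fin m),
      (fun j => (σ j : ℕ)) ∈ Fintype.piFinset fun _ => range (m + S + 1) :=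
    fun σ => Fintype.mem_piFinset.2 fun j => mem_range.2 (by omega)
  rw [det_comp_X_sub_C_eq_sum R l hN]
  refine degree_eq_of_le_of_coeff_ne_zero (degree_sum_C_mul_det_hasseDerivMatrix_le _ _ _) ?_
  rw [coeff_sum_C_mul_det_hasseDerivMatrix R _ hP, sum_sign_mul_prod_pow_eq_det_vandermonde]
  exact mul_ne_zero (det_vandermonde_ne_zero_iff.2 (neg_injective.comp hl))
    (det_choose_mul_ne_zero hd fun i => leadingCoeff_ne_zero.2 (hR0 i))
end

section
/- Let R_1,...,R_m be nonzero real polynomials with pairwise distinct degrees. For j = 1,...,m+1, let U_j(x) be the m×m matrix whose l-th row is (R_l(x-r)) for r ranging over {1-j, 2-j, ..., m+1-j} \ {0}. Then the polynomial Σ_{j=1}^{m+1} (-1)^{j+1} det U_j(x) has degree at most (Σ_{i=1}^m deg R_i) - binom(m+1, 2). -/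
open Polynomial Finset

/-- The r-values of the j-th matrix U_j: for j = 1,...,m+1 (here j0 = j-1 : Fin (m+1)),
the r's range over {1-j, 2-j, ..., m+1-j} \ {0}, listed in increasing order. -/
def rVal (m : ℕ) (j0 : Fin (m + 1)) (k : Fin m) : ℤ :=
  if (k : ℤ) < (j0 : ℤ) then (k : ℤ) - (j0 : ℤ) else (k : ℤ) - (j0 : ℤ) + 1


lemma choose_two_le_sum_finset_aux (n : ℕ) :
    ∀ S : Finset ℕ, S.card = n → n.choose 2 ≤ ∑ x ∈ S, x := by
  induction n with
  | zero => intro S _; simp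
  | succ n ih =>
    intro S hn
    have hne : S.Nonempty := by
      rw [← Finset.card_pos, hn]; omega
    set M := S.max' hne with hM
    have hMS : M ∈ S := S.max'_mem hne
    have hsub : S ⊆ Finset.range (M + 1) := by
      intro x hx
      simp only [Finset.mem_range]
      have := S.le_max' x hx
      omega
    have hcard : S.card ≤ M + 1 := by
      calc S.card ≤ (Finset.range (M+1)).card := Finset.card_le_card hsub
      _ = M + 1 := by simp
    have hnM : n ≤ M := by omega
    have hsum : ∑ x ∈ S, x = M + ∑ x ∈ S.erase M, x := (Finset.add_sum_erase S _ hMS).symm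
    have hcard' : (S.erase M).card = n := by
      rw [Finset.card_erase_of_mem hMS]; omega
    have := ih (S.erase M) hcard'
    have hch : (n+1).choose 2 = n.choose 1 + n.choose 2 := Nat.choose_succ_succ n 1
    simp only [Nat.choose_one_right] at hch
    omega

lemma choose_two_le_sum_finset (S : Finset ℕ) : S.card.choose 2 ≤ ∑ x ∈ S, x :=
  choose_two_le_sum_finset_aux S.card S rfl

lemma choose_two_le_sum_inj {n : ℕ} (f : Fin n → ℕ) (hf : Function.Injective f) :
    n.choose 2 ≤ ∑ i, f i := by
  have himg : (Finset.univ.image f).card = n := by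
    rw [Finset.card_image_of_injective _ hf, Finset.card_univ, Fintype.card_fin]
  have := choose_two_le_sum_finset (Finset.univ.image f)
  rw [himg, Finset.sum_image (fun a _ b _ h => hf h)] at this
  exact this

lemma det_pow_zero {n : ℕ} (f : Fin n → ℕ) (h : ∑ i, f i < n.choose 2) :
    (Matrix.of fun p k : Fin n => ((k : ℕ) : ℝ) ^ f p).det = 0 := by
  have hf : ¬ Function.Injective f := fun hinj => absurd (choose_two_le_sum_inj f hinj) (by omega)
  rw [Function.not_injective_iff] at hf
  obtain ⟨p, q, hfe, hne⟩ := hf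
  exact Matrix.det_zero_of_row_eq hne (by funext k; simp [hfe])


lemma det_row_expand {S : Type*} [CommRing S] {n : ℕ} (A : Fin n → Finset ℕ)
    (c : Fin n → ℕ → S) (v : Fin n → ℕ → Fin n → S)
    (M : Matrix (Fin n) (Fin n) S)
    (hM : ∀ l, M l = fun k => ∑ b ∈ A l, c l b * v l b k) :
    M.det = ∑ r ∈ Fintype.piFinset A, (∏ l, c l (r l)) *
      (Matrix.of fun l k => v l (r l) k).det := by
  have h1 : M.det = Matrix.detRowAlternating M := rfl
  have h2 : (M : Fin n → Fin n → S) = fun l => ∑ b ∈ A l, c l b • (v l b) := by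
    funext l
    rw [hM l]
    ext k
    simp [Finset.sum_apply, smul_eq_mul]
  have h3 := (Matrix.detRowAlternating (R := S) (n := Fin n)).toMultilinearMap.map_sum_finset
    (g := fun l b => c l b • v l b) (A := A)
  simp only [AlternatingMap.coe_multilinearMap] at h3
  rw [h1, h2, h3]
  refine Finset.sum_congr rfl fun r _ => ?_
  have h4 := (Matrix.detRowAlternating (R := S) (n := Fin n)).toMultilinearMap.map_smul_univ
    (fun l => c l (r l)) (fun l => v l (r l))
  simp only [AlternatingMap.coe_multilinearMap] at h4
  rw [h4, smul_eq_mul]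
  rfl

lemma rVal_eq (m : ℕ) (i : Fin (m + 1)) (k : Fin m) :
    -((rVal m i k : ℤ) : ℝ) = ((i : ℕ) : ℝ) - ((i.succAbove k : ℕ) : ℝ) := by
  have h : -(rVal m i k) = ((i : ℕ) : ℤ) - ((i.succAbove k : ℕ) : ℤ) := by
    unfold rVal
    rw [Fin.succAbove]
    split_ifs with h1 h2 h2 <;>
      simp only [Fin.lt_def, Fin.coe_castSucc, Fin.val_succ] at * <;> push_cast at * <;> omega
  rw [show ((rVal m i k : ℤ) : ℝ) = -(((i : ℕ) : ℤ) - ((i.succAbove k : ℕ) : ℤ) : ℤ) by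
    rw [← h]; push_cast; ring]
  push_cast
  ring


lemma cofactor (m s : ℕ) (b : Fin m → ℕ) :
    ∑ i : Fin (m + 1), (-1 : ℝ) ^ (i : ℕ) * ((i : ℕ) : ℝ) ^ s *
      (Matrix.of fun l k : Fin m => (((i.succAbove k : Fin (m + 1)) : ℕ) : ℝ) ^ b l).det
    = (Matrix.of fun p k : Fin (m + 1) => ((k : ℕ) : ℝ) ^ ((Fin.cons s b : Fin (m+1) → ℕ) p)).det := by
  set B : Matrix (Fin (m+1)) (Fin (m+1)) ℝ :=
    Matrix.of fun p k : Fin (m + 1) => ((k : ℕ) : ℝ) ^ ((Fin.cons s b : Fin (m+1) → ℕ) p) with hB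
  rw [Matrix.det_succ_row_zero]
  refine Finset.sum_congr rfl fun i _ => ?_
  have h0 : B 0 i = ((i : ℕ) : ℝ) ^ s := by simp [hB]
  have h1 : B.submatrix Fin.succ i.succAbove =
      Matrix.of fun l k : Fin m => (((i.succAbove k : Fin (m + 1)) : ℕ) : ℝ) ^ b l := by
    ext l k
    simp [hB, Matrix.submatrix_apply, Fin.cons_succ]
  rw [h0, h1]

lemma key (m : ℕ) (e : Fin m → ℕ) (he : ∑ l, e l < (m + 1).choose 2) :
    ∑ i : Fin (m + 1), (-1 : ℝ) ^ (i : ℕ) *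
      (Matrix.of fun l k : Fin m => (-((rVal m i k : ℤ) : ℝ)) ^ e l).det = 0 := by
  have hbinom : ∀ (x y : ℝ) (n : ℕ), (y - x) ^ n =
      ∑ b ∈ Finset.range (n + 1), ((-1) ^ b * (n.choose b : ℝ) * y ^ (n - b)) * x ^ b := by
    intro x y n
    rw [sub_eq_add_neg, add_comm, add_pow]
    refine Finset.sum_congr rfl fun b _ => ?_
    rw [neg_pow]
    ring
  -- expand each det
  have hexp : ∀ i : Fin (m + 1),
      (Matrix.of fun l k : Fin m => (-((rVal m i k : ℤ) : ℝ)) ^ e l).det =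
      ∑ r ∈ Fintype.piFinset (fun l => Finset.range (e l + 1)),
        (∏ l, ((-1 : ℝ) ^ (r l) * ((e l).choose (r l) : ℝ) * ((i : ℕ) : ℝ) ^ (e l - r l))) *
        (Matrix.of fun l k : Fin m => (((i.succAbove k : Fin (m+1)) : ℕ) : ℝ) ^ (r l)).det := by
    intro i
    exact det_row_expand (fun l => Finset.range (e l + 1))
      (fun l b => (-1 : ℝ) ^ b * ((e l).choose b : ℝ) * ((i : ℕ) : ℝ) ^ (e l - b))
      (fun l b k => (((i.succAbove k : Fin (m+1)) : ℕ) : ℝ) ^ b)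
      _
      (fun l => by
        funext k
        show (-((rVal m i k : ℤ) : ℝ)) ^ e l = _
        rw [rVal_eq m i k, hbinom])
  simp only [hexp]
  simp only [Finset.mul_sum]
  rw [Finset.sum_comm]
  refine Finset.sum_eq_zero fun r hr => ?_
  have hrle : ∀ l, r l ≤ e l := by
    intro l
    have := (Fintype.mem_piFinset.mp hr) l
    simp only [Finset.mem_range] at this
    omega
  set s : ℕ := ∑ l, (e l - r l) with hs
  set P : ℝ := ∏ l, ((-1 : ℝ) ^ (r l) * ((e l).choose (r l) : ℝ)) with hP
  have hsplit : ∀ i : Fin (m + 1),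
      (∏ l, ((-1 : ℝ) ^ (r l) * ((e l).choose (r l) : ℝ) * ((i : ℕ) : ℝ) ^ (e l - r l)))
      = P * ((i : ℕ) : ℝ) ^ s := by
    intro i
    rw [hP, hs, ← Finset.prod_pow_eq_pow_sum, ← Finset.prod_mul_distrib]
  calc ∑ i : Fin (m + 1), (-1 : ℝ) ^ (i : ℕ) *
        ((∏ l, ((-1 : ℝ) ^ (r l) * ((e l).choose (r l) : ℝ) * ((i : ℕ) : ℝ) ^ (e l - r l))) *
        (Matrix.of fun l k : Fin m => (((i.succAbove k : Fin (m+1)) : ℕ) : ℝ) ^ (r l)).det)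
      = P * ∑ i : Fin (m + 1), (-1 : ℝ) ^ (i : ℕ) * ((i : ℕ) : ℝ) ^ s *
        (Matrix.of fun l k : Fin m => (((i.succAbove k : Fin (m+1)) : ℕ) : ℝ) ^ (r l)).det := by
        rw [Finset.mul_sum]
        refine Finset.sum_congr rfl fun i _ => ?_
        rw [hsplit i]
        ring
    _ = 0 := by
        rw [cofactor m s r, det_pow_zero]
        · ring
        · rw [Fin.sum_cons]
          have h1 : s + ∑ l, r l = ∑ l, e l := by
            rw [hs, ← Finset.sum_add_distrib]
            exact Finset.sum_congr rfl fun l _ => by have := hrle l; omega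
          omega

/-- For nonzero polynomials R_1,...,R_m of pairwise distinct degrees, the alternating sum
sum_{j=1}^{m+1} (-1)^{j+1} det U_j(x), where U_j(x) has (l,k)-entry R_l(x - r) with r the
k-th element of {1-j,...,m+1-j} \ {0}, has degree at most (sum of degrees) - binom(m+1,2). -/
theorem casorati_alt_sum_degree (m : ℕ) (R : Fin m → Polynomial ℝ)
    (hR0 : ∀ i, R i ≠ 0)
    (hdeg : ∀ i j, i ≠ j → (R i).natDegree ≠ (R j).natDegree) :
    let D : Polynomial ℝ := ∑ j0 : Fin (m + 1), (-1 : Polynomial ℝ) ^ (j0 : ℕ) *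
      Matrix.det (Matrix.of fun l k : Fin m =>
        (R l).comp (Polynomial.X - Polynomial.C ((rVal m j0 k : ℤ) : ℝ)))
    D = 0 ∨ ((D.natDegree : ℤ) ≤ (∑ i, ((R i).natDegree : ℤ)) - ((m + 1).choose 2 : ℤ)) := by
  intro D
  -- the real-valued inner determinant
  set dR : Fin (m + 1) → (Fin m → ℕ) → (Fin m → ℕ) → ℝ := fun i a t =>
    (Matrix.of fun l k : Fin m => (-((rVal m i k : ℤ) : ℝ)) ^ (a l - t l)).det with hdR
  set F : (Fin m → ℕ) → (Fin m → ℕ) → ℝ := fun a t =>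
    ∑ i : Fin (m + 1), (-1 : ℝ) ^ (i : ℕ) * dR i a t with hF
  -- Step A+B+C : expansion of each det U_i
  have hUdet : ∀ i : Fin (m + 1),
      (Matrix.of fun l k : Fin m =>
        (R l).comp (Polynomial.X - Polynomial.C ((rVal m i k : ℤ) : ℝ))).det
      = ∑ a ∈ Fintype.piFinset (fun l => Finset.range ((R l).natDegree + 1)),
          ∑ t ∈ Fintype.piFinset (fun l => Finset.range (a l + 1)),
            Polynomial.C ((∏ l, (R l).coeff (a l)) * (∏ l, ((a l).choose (t l) : ℝ)))
              * Polynomial.X ^ (∑ l, t l) * Polynomial.C (dR i a t) := by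
    intro i
    have stepA := det_row_expand (fun l => Finset.range ((R l).natDegree + 1))
      (fun l a => Polynomial.C ((R l).coeff a))
      (fun l a k => (Polynomial.X - Polynomial.C ((rVal m i k : ℤ) : ℝ)) ^ a)
      (Matrix.of fun l k : Fin m =>
        (R l).comp (Polynomial.X - Polynomial.C ((rVal m i k : ℤ) : ℝ)))
      (fun l => by
        funext k
        show (R l).comp (Polynomial.X - Polynomial.C ((rVal m i k : ℤ) : ℝ)) = _
        rw [Polynomial.comp, Polynomial.eval₂_eq_sum_range])
    beta_reduce at stepA
    rw [stepA]
    refine Finset.sum_congr rfl fun a ha => ?_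
    have stepB := det_row_expand (fun l => Finset.range (a l + 1))
      (fun l t => ((a l).choose t : Polynomial ℝ) * Polynomial.X ^ t)
      (fun l t k => (Polynomial.C (-((rVal m i k : ℤ) : ℝ))) ^ (a l - t))
      (Matrix.of fun l k : Fin m => (Polynomial.X - Polynomial.C ((rVal m i k : ℤ) : ℝ)) ^ (a l))
      (fun l => by
        funext k
        show (Polynomial.X - Polynomial.C ((rVal m i k : ℤ) : ℝ)) ^ (a l) = _
        rw [sub_eq_add_neg, ← map_neg Polynomial.C, add_pow]
        refine Finset.sum_congr rfl fun t _ => ?_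
        ring)
    beta_reduce at stepB
    rw [stepB, Finset.mul_sum]
    refine Finset.sum_congr rfl fun t ht => ?_
    -- step C
    have stepC : (Matrix.of fun l k : Fin m =>
        (Polynomial.C (-((rVal m i k : ℤ) : ℝ))) ^ (a l - t l)).det
        = Polynomial.C (dR i a t) := by
      rw [hdR]
      rw [RingHom.map_det (Polynomial.C : ℝ →+* Polynomial ℝ)]
      congr 1
      ext l k
      simp [Matrix.map_apply, map_pow]
    rw [stepC]
    -- rearrange scalars
    have h1 : (∏ l, Polynomial.C ((R l).coeff (a l)))
        = Polynomial.C (∏ l, (R l).coeff (a l)) := (map_prod _ _ _).symm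
    have h2 : (∏ l, (((a l).choose (t l) : Polynomial ℝ) * Polynomial.X ^ (t l)))
        = Polynomial.C (∏ l, ((a l).choose (t l) : ℝ)) * Polynomial.X ^ (∑ l, t l) := by
      rw [Finset.prod_mul_distrib, Finset.prod_pow_eq_pow_sum]
      congr 1
      rw [map_prod]
      refine Finset.prod_congr rfl fun l _ => ?_
      simp [Polynomial.C_eq_natCast]
    rw [h1, h2, map_mul]
    ring
  -- rewrite D
  have hD_eq : D = ∑ a ∈ Fintype.piFinset (fun l => Finset.range ((R l).natDegree + 1)),
      ∑ t ∈ Fintype.piFinset (fun l => Finset.range (a l + 1)),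
        Polynomial.C ((∏ l, (R l).coeff (a l)) * (∏ l, ((a l).choose (t l) : ℝ)) * F a t)
          * Polynomial.X ^ (∑ l, t l) := by
    show (∑ j0 : Fin (m + 1), (-1 : Polynomial ℝ) ^ (j0 : ℕ) *
      Matrix.det (Matrix.of fun l k : Fin m =>
        (R l).comp (Polynomial.X - Polynomial.C ((rVal m j0 k : ℤ) : ℝ)))) = _
    have : ∀ i : Fin (m + 1), (-1 : Polynomial ℝ) ^ (i : ℕ) *
        Matrix.det (Matrix.of fun l k : Fin m =>
          (R l).comp (Polynomial.X - Polynomial.C ((rVal m i k : ℤ) : ℝ)))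
        = ∑ a ∈ Fintype.piFinset (fun l => Finset.range ((R l).natDegree + 1)),
          ∑ t ∈ Fintype.piFinset (fun l => Finset.range (a l + 1)),
            Polynomial.C ((∏ l, (R l).coeff (a l)) * (∏ l, ((a l).choose (t l) : ℝ))
              * ((-1 : ℝ) ^ (i : ℕ) * dR i a t)) * Polynomial.X ^ (∑ l, t l) := by
      intro i
      rw [hUdet i, Finset.mul_sum]
      refine Finset.sum_congr rfl fun a _ => ?_
      rw [Finset.mul_sum]
      refine Finset.sum_congr rfl fun t _ => ?_
      simp only [map_mul, map_pow, map_neg, map_one]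
      ring
    rw [Finset.sum_congr rfl fun i _ => this i]
    rw [Finset.sum_comm]
    refine Finset.sum_congr rfl fun a _ => ?_
    rw [Finset.sum_comm]
    refine Finset.sum_congr rfl fun t _ => ?_
    rw [← Finset.sum_mul]
    congr 1
    rw [← map_sum]
    congr 1
    rw [hF, Finset.mul_sum]
  -- coefficient vanishing
  have hvanish : ∀ n : ℕ,
      ((∑ i, ((R i).natDegree : ℤ)) - ((m + 1).choose 2 : ℤ) < (n : ℤ)) → D.coeff n = 0 := by
    intro n hn
    rw [hD_eq, Polynomial.finset_sum_coeff]
    refine Finset.sum_eq_zero fun a ha => ?_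
    rw [Polynomial.finset_sum_coeff]
    refine Finset.sum_eq_zero fun t ht => ?_
    rw [Polynomial.coeff_C_mul, Polynomial.coeff_X_pow]
    by_cases hnt : n = ∑ l, t l
    · -- show the constant is zero since F a t = 0
      have hale : ∀ l, a l ≤ (R l).natDegree := fun l => by
        have := (Fintype.mem_piFinset.mp ha) l
        simp only [Finset.mem_range] at this
        omega
      have htle : ∀ l, t l ≤ a l := fun l => by
        have := (Fintype.mem_piFinset.mp ht) l
        simp only [Finset.mem_range] at this
        omega
      have hFz : F a t = 0 := by
        rw [hF]
        refine key m (fun l => a l - t l) ?_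
        have hcast : ((∑ l, (a l - t l) : ℕ) : ℤ) = (∑ l, (a l : ℤ)) - (∑ l, (t l : ℤ)) := by
          push_cast
          rw [← Finset.sum_sub_distrib]
          refine Finset.sum_congr rfl fun l _ => ?_
          have := htle l
          omega
        have hsa : (∑ l, (a l : ℤ)) ≤ ∑ l, ((R l).natDegree : ℤ) :=
          Finset.sum_le_sum fun l _ => by exact_mod_cast hale l
        have hst : (∑ l, (t l : ℤ)) = (n : ℤ) := by
          rw [hnt]; push_cast; rfl
        have : ((∑ l, (a l - t l) : ℕ) : ℤ) < ((m + 1).choose 2 : ℤ) := by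
          rw [hcast, hst]
          omega
        exact_mod_cast this
      rw [hFz]
      simp
    · rw [if_neg (by omega)]
      simp
  by_cases hD : D = 0
  · exact Or.inl hD
  · right
    by_contra hcon
    push_neg at hcon
    have hlc := Polynomial.leadingCoeff_ne_zero.mpr hD
    rw [Polynomial.leadingCoeff] at hlc
    exact hlc (hvanish D.natDegree hcon)
end

section
/- With the setup of the discrete Sobolev bilinear form ⟨p,q⟩ = ∫pq dν + ℙ(λ) M ℚ(λ)^T (where ℙ(λ) = (p(λ),...,p^{(m-1)}(λ))), if a sequence (q_n) of left orthogonal polynomials with respect to ⟨·,·⟩ exists, then each q_n, when normalized to have the same leading coefficient as p_n, can be written as q_n = Σ_{j=0}^m β_{n,j} p_{n-j} with β_{n,0} = 1, i.e., q_n is a linear combination of at most m+1 consecutive orthogonal polynomials p_{n-m},...,p_n with respect to (x-λ)^m ν. -/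
open Polynomial Finset MeasureTheory

/-- Polynomial sequence indexed by ℤ, with the convention p_k = 0 for k < 0. -/
noncomputable def pZ (p : ℕ → Polynomial ℝ) (k : ℤ) : Polynomial ℝ :=
  if k < 0 then 0 else p k.toNat

/-- The discrete Sobolev bilinear form
⟨P,Q⟩ = ∫ P Q dν + (P(λ),...,P^{(m-1)}(λ)) M (Q(λ),...,Q^{(m-1)}(λ))ᵀ. -/
noncomputable def sobolevForm (ν : Measure ℝ) (lam : ℝ) (m : ℕ)
    (M : Matrix (Fin m) (Fin m) ℝ) (P Q : Polynomial ℝ) : ℝ :=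
  (∫ x, P.eval x * Q.eval x ∂ν) +
    ∑ i : Fin m, ∑ j : Fin m,
      ((Polynomial.derivative)^[(i : ℕ)] P).eval lam * M i j *
        ((Polynomial.derivative)^[(j : ℕ)] Q).eval lam

/-- R_{l+1}(n) = w_{n,l} + l! ∑_{i=0}^{m-1} M_{l,i} p_n^{(i)}(λ), where
w_{n,l} = ∫ (x-λ)^l p_n dν  (with p_n = 0 for n < 0). -/
noncomputable def sobolevR (ν : Measure ℝ) (lam : ℝ) (m : ℕ)
    (M : Matrix (Fin m) (Fin m) ℝ) (p : ℕ → Polynomial ℝ) (l : Fin m) (n : ℤ) : ℝ :=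
  (∫ x, (x - lam) ^ (l : ℕ) * (pZ p n).eval x ∂ν) +
    (Nat.factorial l) * ∑ i : Fin m, M l i *
      ((Polynomial.derivative)^[(i : ℕ)] (pZ p n)).eval lam

/-- The Casorati determinant Ω(n) = det(R_i(n-j))_{i,j=1}^m. -/
noncomputable def sobolevOmega (ν : Measure ℝ) (lam : ℝ) (m : ℕ)
    (M : Matrix (Fin m) (Fin m) ℝ) (p : ℕ → Polynomial ℝ) (n : ℤ) : ℝ :=
  Matrix.det (Matrix.of fun i j : Fin m => sobolevR ν lam m M p i (n - (j : ℤ) - 1))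

/-- The candidate discrete Sobolev orthogonal polynomial q_n, given as the
(m+1)×(m+1) determinant with first row (p_n, p_{n-1}, ..., p_{n-m}) and remaining
rows (R_l(n), R_l(n-1), ..., R_l(n-m)), l = 1,...,m. -/
noncomputable def sobolevQ (ν : Measure ℝ) (lam : ℝ) (m : ℕ)
    (M : Matrix (Fin m) (Fin m) ℝ) (p : ℕ → Polynomial ℝ) (n : ℕ) : Polynomial ℝ :=
  Matrix.det (Matrix.of fun i j : Fin (m + 1) =>
    if h : (i : ℕ) = 0 then pZ p ((n : ℤ) - (j : ℤ))
    else Polynomial.C (sobolevR ν lam m M p ⟨(i : ℕ) - 1, by omega⟩ ((n : ℤ) - (j : ℤ))))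

/-! Rescale `q n` to the leading coefficient of `p n` and expand it as `∑_{k ≤ n} c_k p_k`, so that
`c_n = 1`. For `k + m < n` the polynomial `(x - λ)^m p_k` has degree `< n` and its derivatives of
order `< m` vanish at `λ`, so the discrete part of `⟨q_n, (x - λ)^m p_k⟩` drops out and left
orthogonality gives `∫ q_n (x - λ)^m p_k dν = 0`. By the orthogonality of the `p_j` with respect to
`(x - λ)^m ν` this integral is `c_k ∫ (x - λ)^m p_k² dν`, hence `c_k = 0`. -/
section OrthogonalExpansion

variable {ν : Measure ℝ}

theorem integrable_eval_of_moments (hmom : ∀ k : ℕ, Integrable (fun x => x ^ k) ν)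
    (P : ℝ[X]) : Integrable (fun x => P.eval x) ν := by
  simp_rw [eval_eq_sum_range]
  exact integrable_finsetSum _ fun i _ => (hmom i).const_mul _

theorem integral_eval_sum_smul (hmom : ∀ k : ℕ, Integrable (fun x => x ^ k) ν)
    (s : Finset ℕ) (c : ℕ → ℝ) (P : ℕ → ℝ[X]) :
    ∫ x, (∑ j ∈ s, c j • P j).eval x ∂ν = ∑ j ∈ s, c j * ∫ x, (P j).eval x ∂ν := by
  simp only [eval_finsetSum, eval_smul, smul_eq_mul]
  rw [integral_finsetSum _ fun j _ => (integrable_eval_of_moments hmom (P j)).const_mul _]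
  exact Finset.sum_congr rfl fun j _ => integral_const_mul _ _

theorem integral_eval_sum_smul_mul_of_orthogonal
    (hmom : ∀ k : ℕ, Integrable (fun x => x ^ k) ν) (w : ℝ[X])
    (p : ℕ → ℝ[X]) (hpdeg : ∀ n, (p n).degree = n)
    (hporth : ∀ (n : ℕ) (r : ℝ[X]), r.degree < n → ∫ x, (w * p n * r).eval x ∂ν = 0)
    (c : ℕ → ℝ) {N k : ℕ} (hk : k < N) :
    ∫ x, ((∑ j ∈ range N, c j • p j) * (w * p k)).eval x ∂ν
      = c k * ∫ x, (w * p k * p k).eval x ∂ν := by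
  have hpair : ∀ j, j ≠ k → ∫ x, (p j * (w * p k)).eval x ∂ν = 0 := by
    intro j hjk
    rcases hjk.lt_or_gt with hjk | hkj
    · rw [show p j * (w * p k) = w * p k * p j by ring]
      exact hporth k (p j) (by rw [hpdeg]; exact_mod_cast hjk)
    · rw [show p j * (w * p k) = w * p j * p k by ring]
      exact hporth j (p k) (by rw [hpdeg]; exact_mod_cast hkj)
  simp_rw [Finset.sum_mul, smul_mul_assoc]
  rw [integral_eval_sum_smul hmom, Finset.sum_eq_single_of_mem k (mem_range.mpr hk)
      fun j _ hjk => by rw [hpair j hjk, mul_zero], show p k * (w * p k) = w * p k * p k by ring]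

end OrthogonalExpansion

theorem exists_eq_sum_range_smul_of_degree_eq {K : Type*} [Field K] (p : ℕ → K[X])
    (hpdeg : ∀ n, (p n).degree = n) {n : ℕ} {f : K[X]} (hfdeg : f.degree = n)
    (hflc : f.leadingCoeff = (p n).leadingCoeff) :
    ∃ c : ℕ → K, c n = 1 ∧ f = ∑ k ∈ range (n + 1), c k • p k := by
  let S : Sequence K := ⟨p, hpdeg⟩
  have hmem : f ∈ Submodule.span K (p '' ↑(range (n + 1))) := by
    rw [coe_range, S.span_degreeLT fun i _ => (leadingCoeff_ne_zero.mpr (S.ne_zero i)).isUnit,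
      mem_degreeLT, hfdeg]
    exact_mod_cast n.lt_succ_self
  obtain ⟨c, hc⟩ := (Submodule.mem_span_image_finset_iff_exists_fun' K).mp hmem
  refine ⟨c, ?_, hc.symm⟩
  have hcoeff : f.coeff n = c n * (p n).leadingCoeff := by
    rw [← hc, finsetSum_coeff, sum_range_succ, Finset.sum_eq_zero fun k hk => ?_, zero_add,
      coeff_smul, smul_eq_mul, leadingCoeff, S.natDegree_eq]
    rw [coeff_smul, coeff_eq_zero_of_degree_lt (by rw [hpdeg]; exact_mod_cast mem_range.mp hk),
      smul_zero]
  rw [← coeff_natDegree, natDegree_eq_of_degree_eq_some hfdeg] at hflc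
  rw [hflc] at hcoeff
  exact (mul_eq_right₀ (leadingCoeff_ne_zero.mpr (S.ne_zero n))).mp hcoeff.symm

theorem pZ_of_neg (p : ℕ → ℝ[X]) {k : ℤ} (hk : k < 0) : pZ p k = 0 := if_pos hk

theorem pZ_natCast_sub (p : ℕ → ℝ[X]) {n j : ℕ} (hj : j ≤ n) :
    pZ p ((n : ℤ) - (j : ℤ)) = p (n - j) := by
  rw [pZ, if_neg (by omega)]
  congr 1
  omega

theorem sum_range_smul_eq_sum_fin_smul_pZ (p : ℕ → ℝ[X]) (c : ℕ → ℝ) {m n : ℕ}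
    (hc : ∀ k, k + m < n → c k = 0) :
    ∑ k ∈ range (n + 1), c k • p k
      = ∑ j : Fin (m + 1), c (n - j) • pZ p ((n : ℤ) - (j : ℤ)) := by
  set t : ℕ → ℝ[X] := fun j => c (n - j) • pZ p ((n : ℤ) - (j : ℤ))
  have ht : ∀ j ≥ min m n + 1, t j = 0 := by
    intro j hj
    rcases le_or_gt j n with hjn | hnj
    · simp only [t, hc (n - j) (by omega), zero_smul]
    · simp only [t, pZ_of_neg p (by omega : (n : ℤ) - j < 0), smul_zero]
  calc ∑ k ∈ range (n + 1), c k • p k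
      = ∑ j ∈ range (n + 1), t j := by
        rw [← sum_range_reflect]
        refine Finset.sum_congr rfl fun j hj => ?_
        simp only [t, pZ_natCast_sub p (mem_range_succ_iff.mp hj), add_tsub_cancel_right]
    _ = ∑ j ∈ range (min m n + 1), t j := eventually_constant_sum ht (by omega)
    _ = ∑ j : Fin (m + 1), t j := by
        rw [Fin.sum_univ_eq_sum_range t,
          eventually_constant_sum ht (by omega : min m n + 1 ≤ m + 1)]

theorem eval_iterate_derivative_X_sub_C_pow_mul {R : Type*} [CommRing R] (a : R) {i m : ℕ}
    (hi : i < m) (Q : R[X]) : (derivative^[i] ((X - C a) ^ m * Q)).eval a = 0 := by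
  obtain ⟨S, hS⟩ := pow_sub_dvd_iterate_derivative_of_pow_dvd i (dvd_mul_right ((X - C a) ^ m) Q)
  rw [hS, eval_mul, eval_pow, eval_sub, eval_X, eval_C, sub_self, zero_pow (by omega), zero_mul]

theorem sobolevForm_X_sub_C_pow_mul (ν : Measure ℝ) (lam : ℝ) (m : ℕ)
    (M : Matrix (Fin m) (Fin m) ℝ) (P R : ℝ[X]) :
    sobolevForm ν lam m M P ((X - C lam) ^ m * R)
      = ∫ x, P.eval x * ((X - C lam) ^ m * R).eval x ∂ν := by
  simp [sobolevForm, eval_iterate_derivative_X_sub_C_pow_mul lam (Fin.is_lt _)]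

theorem sobolev_consecutive_combination_general (ν : Measure ℝ)
    (hmom : ∀ k : ℕ, Integrable (fun x => x ^ k) ν)
    (lam : ℝ) (m : ℕ) (M : Matrix (Fin m) (Fin m) ℝ)
    (p : ℕ → Polynomial ℝ) (hpdeg : ∀ n, (p n).degree = (n : ℕ))
    (hporth : ∀ n : ℕ, ∀ r : Polynomial ℝ, r.degree < (n : ℕ) →
      ∫ x, (x - lam) ^ m * (p n).eval x * r.eval x ∂ν = 0)
    (hpnorm : ∀ n : ℕ, ∫ x, (x - lam) ^ m * ((p n).eval x) ^ 2 ∂ν ≠ 0)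
    (q : ℕ → Polynomial ℝ) (hqdeg : ∀ n, (q n).degree = (n : ℕ))
    (hqorth : ∀ n : ℕ, ∀ r : Polynomial ℝ, r.degree < (n : ℕ) →
      sobolevForm ν lam m M (q n) r = 0) :
    ∀ n : ℕ, ∃ β : Fin (m + 1) → ℝ, β 0 = 1 ∧
      ((p n).leadingCoeff / (q n).leadingCoeff) • q n
        = ∑ j : Fin (m + 1), β j • pZ p ((n : ℤ) - (j : ℤ)) := by
  intro n
  have hplc : (p n).leadingCoeff ≠ 0 := leadingCoeff_ne_zero.mpr (Sequence.ne_zero ⟨p, hpdeg⟩ n)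
  have hqlc : (q n).leadingCoeff ≠ 0 := leadingCoeff_ne_zero.mpr (Sequence.ne_zero ⟨q, hqdeg⟩ n)
  set r := (p n).leadingCoeff / (q n).leadingCoeff
  have hr : r ≠ 0 := div_ne_zero hplc hqlc
  obtain ⟨c, hcn, hc⟩ := exists_eq_sum_range_smul_of_degree_eq p hpdeg (n := n) (f := r • q n)
    (by rw [smul_eq_C_mul, degree_C_mul hr, hqdeg])
    (by rw [smul_eq_C_mul, leadingCoeff_mul, leadingCoeff_C, div_mul_cancel₀ _ hqlc])
  have hporth_eval : ∀ (k : ℕ) (s : ℝ[X]), s.degree < (k : ℕ) →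
      ∫ x, ((X - C lam) ^ m * p k * s).eval x ∂ν = 0 := fun k s hs => by
    simpa using hporth k s hs
  have hvanish : ∀ k, k + m < n → c k = 0 := by
    intro k hk
    have hdeg : ((X - C lam) ^ m * p k).degree < (n : WithBot ℕ) := by
      rw [degree_mul, degree_pow, degree_X_sub_C, hpdeg, nsmul_one]
      exact_mod_cast (by omega : m + k < n)
    have horth := hqorth n _ hdeg
    rw [sobolevForm_X_sub_C_pow_mul] at horth
    have hweighted : ∫ x, ((r • q n) * ((X - C lam) ^ m * p k)).eval x ∂ν = 0 := by
      simp only [eval_mul, eval_smul, smul_eq_mul, mul_assoc, integral_const_mul] at horth ⊢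
      rw [horth, mul_zero]
    rw [hc, integral_eval_sum_smul_mul_of_orthogonal hmom _ p hpdeg hporth_eval c (by omega)]
      at hweighted
    exact (mul_eq_zero.mp hweighted).resolve_right (by simpa [pow_two, mul_assoc] using hpnorm k)
  exact ⟨fun j => c (n - j), hcn, by rw [hc, sum_range_smul_eq_sum_fin_smul_pZ p c hvanish]⟩

/-- If a sequence (q_n) of left orthogonal polynomials for the discrete Sobolev bilinear
form exists, then each q_n, normalized to have the same leading coefficient as p_n, is a
linear combination q_n = ∑_{j=0}^m β_{n,j} p_{n-j} with β_{n,0} = 1 of at most m+1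
consecutive orthogonal polynomials for (x-λ)^m ν. -/
theorem sobolev_consecutive_combination (ν : Measure ℝ)
    (hmom : ∀ k : ℕ, Integrable (fun x => x ^ k) ν)
    (lam : ℝ) (m : ℕ) (hm : 1 ≤ m) (M : Matrix (Fin m) (Fin m) ℝ)
    (p : ℕ → Polynomial ℝ) (hpdeg : ∀ n, (p n).degree = (n : ℕ))
    (hporth : ∀ n : ℕ, ∀ r : Polynomial ℝ, r.degree < (n : ℕ) →
      ∫ x, (x - lam) ^ m * (p n).eval x * r.eval x ∂ν = 0)
    (hpnorm : ∀ n : ℕ, ∫ x, (x - lam) ^ m * ((p n).eval x) ^ 2 ∂ν ≠ 0)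
    (q : ℕ → Polynomial ℝ) (hqdeg : ∀ n, (q n).degree = (n : ℕ))
    (hqorth : ∀ n : ℕ, ∀ r : Polynomial ℝ, r.degree < (n : ℕ) →
      sobolevForm ν lam m M (q n) r = 0)
    (hqnorm : ∀ n : ℕ, sobolevForm ν lam m M (q n) (q n) ≠ 0) :
    ∀ n : ℕ, ∃ β : Fin (m + 1) → ℝ, β 0 = 1 ∧
      ((p n).leadingCoeff / (q n).leadingCoeff) • q n
        = ∑ j : Fin (m + 1), β j • pZ p ((n : ℤ) - (j : ℤ)) :=
  sobolev_consecutive_combination_general ν hmom lam m M p hpdeg hporth hpnorm q hqdeg hqorth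
end
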